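/- arXiv:2506.23312 — 2 statements merged into one kernel-verified Lean document; each statement's English description precedes it below -/
import Mathlib

section
/- Let A = (a_1,…,a_{n+1}) with possibly repeated entries, partitioned into blocks I_1,…,I_s of equal values. For B satisfying b_i = b_j whenever a_i = a_j, define F_B = (1/2) ∑_{i<j, a_i≠a_j} ((b_i−b_j)/(a_i−a_j)) M_{ij}^2 + ∑ b_i (X^i)^2. Then for any two such vectors B_1, B_2 the functions F_{B_1} and F_{B_2} Poisson commute on T*S^n. -/
open scoped BigOperators

/-- Ambient coordinates on `T*Sⁿ ⊂ ℝ^{n+1} × ℝ^{n+1}`: pairs `(x, p)`. -/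
abbrev Phase (N : ℕ) := (Fin N → ℝ) × (Fin N → ℝ)

/-- The canonical Poisson bracket in the ambient coordinates `(x, p)`:
`{F,G} = ∑ₖ (∂F/∂pₖ ∂G/∂xₖ - ∂F/∂xₖ ∂G/∂pₖ)`. -/
noncomputable def pb {N : ℕ} (F G : Phase N → ℝ) (z : Phase N) : ℝ :=
  ∑ k, (fderiv ℝ F z ((0 : Fin N → ℝ), Pi.single k 1)
          * fderiv ℝ G z (Pi.single k 1, (0 : Fin N → ℝ))
      - fderiv ℝ F z (Pi.single k 1, (0 : Fin N → ℝ))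
          * fderiv ℝ G z ((0 : Fin N → ℝ), Pi.single k 1))

/-- `T*Sⁿ` realized as the constraint set `{|x| = 1, ⟨x,p⟩ = 0}`. -/
def TS (N : ℕ) : Set (Phase N) := {z | (∑ k, (z.1 k)^2 = 1) ∧ (∑ k, z.1 k * z.2 k = 0)}

/-- Momentum function `M_{ij}` of the rotation `Xⁱ ∂_{Xʲ} - Xʲ ∂_{Xⁱ}`. -/
def Mf {N : ℕ} (i j : Fin N) (z : Phase N) : ℝ := z.1 i * z.2 j - z.1 j * z.2 i

/-- The integral of the degenerate Neumann system:
`F_B = (1/2) ∑_{i<j, aᵢ≠aⱼ} ((bᵢ-bⱼ)/(aᵢ-aⱼ)) M_{ij}² + ∑ᵢ bᵢ (Xⁱ)²`. -/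
noncomputable def FBdeg {N : ℕ} (a B : Fin N → ℝ) (z : Phase N) : ℝ :=
  (1/2) * ∑ i, ∑ j ∈ Finset.Ioi i,
      (if a i = a j then 0 else (B i - B j)/(a i - a j)) * (Mf i j z)^2
    + ∑ i, B i * (z.1 i)^2

/-!
With the divided differences `c_{ij} = (bᵢ - bⱼ)/(aᵢ - aⱼ)` (zero inside a block of `a`) one has
`F_B = ¼ ∑_{i,j} c_{ij} M_{ij}² + ∑ᵢ bᵢ xᵢ²`. For `B = b`, `B' = b'` the bracket `{F_B, F_B'}`
splits into `∑_{i,k} 2 (b'_k c_{ik} - b_k c'_{ik}) M_{ik} xᵢ x_k` and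
`∑_{i,j,k} c_{ik} c'_{jk} M_{ik} M_{jk} M_{ji}`.
In the first sum the coefficient is symmetric in `(i, k)` and `M_{ik} xᵢ x_k` antisymmetric.
In the second, `M_{ik} M_{jk} M_{ji}` is alternating in `(i, j, k)` while the alternation of
`c_{ik} c'_{jk}` is zero: an identity of divided differences which survives the degenerate case
exactly because `b` and `b'` are constant on the blocks of `a`.
-/

open Finset

section SumIdentities

variable {ι R : Type*} [Fintype ι]

theorem sum_sum_eq_two_nsmul_sum_sum_Ioi [LinearOrder ι] [LocallyFiniteOrderTop ι]
    [LocallyFiniteOrderBot ι] {M : Type*} [AddCommMonoid M] (f : ι → ι → M)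
    (hf : ∀ i j, f j i = f i j) (hdiag : ∀ i, f i i = 0) :
    ∑ i, ∑ j, f i j = 2 • ∑ i, ∑ j ∈ Ioi i, f i j := by
  have hlower : ∑ i, ∑ j ∈ Iio i, f i j = ∑ i, ∑ j ∈ Ioi i, f i j :=
    (sum_comm' fun _ _ => by simp [and_comm]).trans
      (sum_congr rfl fun i _ => sum_congr rfl fun j _ => hf i j)
  have hrow (i : ι) : ∑ j, f i j = ∑ j ∈ Ioi i, f i j + ∑ j ∈ Iio i, f i j := by
    rw [← sum_filter_add_sum_filter_not univ (i < ·), filter_lt_eq_Ioi]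
    simp only [not_lt, filter_ge_eq_Iic, Iic_eq_cons_Iio, sum_cons, hdiag, zero_add]
  rw [sum_congr rfl fun i _ => hrow i, sum_add_distrib, hlower, two_nsmul]

theorem sum_sum_rotate [AddCommMonoid R] (f : ι → ι → ι → R) :
    ∑ i, ∑ j, ∑ k, f i j k = ∑ i, ∑ j, ∑ k, f j k i := by
  conv_rhs => rw [sum_comm]
  exact sum_congr rfl fun _ _ => sum_comm

variable [CommRing R] [NoZeroDivisors R] [CharZero R]

theorem sum_sum_mul_eq_zero_of_symm_of_antisymm (s A : ι → ι → R)
    (hs : ∀ i j, s j i = s i j) (hA : ∀ i j, A j i = -A i j) :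
    ∑ i, ∑ j, s i j * A i j = 0 := by
  have hneg : ∑ i, ∑ j, s i j * A i j = -∑ i, ∑ j, s i j * A i j := by
    conv_lhs => rw [sum_comm]
    rw [← sum_neg_distrib]
    refine sum_congr rfl fun i _ => ?_
    rw [← sum_neg_distrib]
    exact sum_congr rfl fun j _ => by rw [hs, hA, mul_neg]
  have htwo : (2 : R) * ∑ i, ∑ j, s i j * A i j = 0 := by linear_combination hneg
  simpa using htwo

theorem sum_sum_sum_mul_eq_zero_of_alternating (s t : ι → ι → ι → R)
    (ht_rotate : ∀ i j k, t j k i = t i j k) (ht_swap : ∀ i j k, t j i k = -t i j k)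
    (hs : ∀ i j k, s i j k + s j k i + s k i j - s j i k - s i k j - s k j i = 0) :
    ∑ i, ∑ j, ∑ k, s i j k * t i j k = 0 := by
  have rotate (u : ι → ι → ι → R) :
      ∑ i, ∑ j, ∑ k, u i j k * t i j k = ∑ i, ∑ j, ∑ k, u j k i * t i j k := by
    rw [sum_sum_rotate]; simp only [ht_rotate]
  have swap (u : ι → ι → ι → R) :
      ∑ i, ∑ j, ∑ k, u i j k * t i j k = -∑ i, ∑ j, ∑ k, u j i k * t i j k := by
    rw [sum_comm, ← sum_neg_distrib]
    refine sum_congr rfl fun i _ => ?_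
    rw [← sum_neg_distrib]
    refine sum_congr rfl fun j _ => ?_
    rw [← sum_neg_distrib]
    exact sum_congr rfl fun k _ => by rw [ht_swap, mul_neg]
  have h1 := rotate s
  have h2 := rotate fun i j k => s j k i
  have h3 := swap s
  have h4 := rotate fun i j k => s j i k
  have h5 := rotate fun i j k => s k j i
  have hsum : ∑ i, ∑ j, ∑ k, (s i j k + s j k i + s k i j - s j i k - s i k j - s k j i)
      * t i j k = 0 := by simp [hs]
  simp only [add_mul, sub_mul, sum_add_distrib, sum_sub_distrib] at hsum h2 h4 h5
  have hsix : (6 : R) * ∑ i, ∑ j, ∑ k, s i j k * t i j k = 0 := by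
    linear_combination hsum + 2 * h1 + h2 + 3 * h3 - 2 * h4 - h5
  simpa using hsix

end SumIdentities

section NeumannCoeff

variable {ι : Type*} (a : ι → ℝ)

noncomputable def neumannCoeff (B : ι → ℝ) (i j : ι) : ℝ :=
  if a i = a j then 0 else (B i - B j) / (a i - a j)

variable {a}

theorem neumannCoeff_comm (B : ι → ℝ) (i j : ι) :
    neumannCoeff a B j i = neumannCoeff a B i j := by
  unfold neumannCoeff
  rcases eq_or_ne (a i) (a j) with h | h
  · simp [h]
  · rw [if_neg h.symm, if_neg h, ← neg_sub (B i), ← neg_sub (a i), neg_div_neg_eq]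

theorem neumannCoeff_of_eq (B : ι → ℝ) {i j : ι} (h : a i = a j) : neumannCoeff a B i j = 0 :=
  if_pos h

theorem neumannCoeff_congr_left {B : ι → ℝ} (hB : ∀ i j, a i = a j → B i = B j) {i i' : ι}
    (h : a i = a i') (j : ι) : neumannCoeff a B i j = neumannCoeff a B i' j := by
  simp only [neumannCoeff, h, hB i i' h]

theorem sub_mul_neumannCoeff_swap (B₁ B₂ : ι → ℝ) (i k : ι) :
    (B₂ k - B₂ i) * neumannCoeff a B₁ i k = (B₁ k - B₁ i) * neumannCoeff a B₂ i k := by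
  unfold neumannCoeff
  rcases eq_or_ne (a i) (a k) with h | h
  · simp [h]
  · have := sub_ne_zero.mpr h
    simp only [if_neg h]
    field_simp
    ring

theorem neumannCoeff_alternating {B₁ B₂ : ι → ℝ} (h₁ : ∀ i j, a i = a j → B₁ i = B₁ j)
    (h₂ : ∀ i j, a i = a j → B₂ i = B₂ j) (i j k : ι) :
    neumannCoeff a B₁ i k * neumannCoeff a B₂ j k + neumannCoeff a B₁ j i * neumannCoeff a B₂ k i
      + neumannCoeff a B₁ k j * neumannCoeff a B₂ i j
      - neumannCoeff a B₁ j k * neumannCoeff a B₂ i k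
      - neumannCoeff a B₁ i j * neumannCoeff a B₂ k j
      - neumannCoeff a B₁ k i * neumannCoeff a B₂ j i = 0 := by
  rcases eq_or_ne (a i) (a k) with hik | hik
  · simp only [neumannCoeff_of_eq _ hik, neumannCoeff_of_eq _ hik.symm,
      neumannCoeff_congr_left h₁ hik, neumannCoeff_congr_left h₂ hik]
    ring
  rcases eq_or_ne (a j) (a k) with hjk | hjk
  · simp only [neumannCoeff_of_eq _ hjk, neumannCoeff_of_eq _ hjk.symm,
      neumannCoeff_congr_left h₁ hjk, neumannCoeff_congr_left h₂ hjk]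
    ring
  rcases eq_or_ne (a j) (a i) with hji | hji
  · simp only [neumannCoeff_of_eq _ hji, neumannCoeff_of_eq _ hji.symm,
      neumannCoeff_congr_left h₁ hji, neumannCoeff_congr_left h₂ hji]
    ring
  have := sub_ne_zero.mpr hik
  have := sub_ne_zero.mpr hjk
  have := sub_ne_zero.mpr hji
  simp only [neumannCoeff, if_neg hik, if_neg hik.symm, if_neg hjk, if_neg hjk.symm,
    if_neg hji, if_neg hji.symm]
  field_simp
  ring

end NeumannCoeff

section Derivatives

variable {N : ℕ}

theorem Mf_swap (i j : Fin N) (z : Phase N) : Mf j i z = -Mf i j z := by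
  unfold Mf; ring

theorem FBdeg_eq_quarter_sum (a B : Fin N → ℝ) :
    FBdeg a B = fun z => (1 / 4) * ∑ i, ∑ j, neumannCoeff a B i j * Mf i j z ^ 2
      + ∑ i, B i * z.1 i ^ 2 := by
  funext z
  rw [sum_sum_eq_two_nsmul_sum_sum_Ioi _ (fun i j => by rw [neumannCoeff_comm, Mf_swap, neg_sq])
    (fun i => by simp [Mf])]
  simp only [FBdeg, neumannCoeff, two_nsmul]
  ring

noncomputable def posCoord (i : Fin N) : Phase N →L[ℝ] ℝ :=
  (ContinuousLinearMap.proj i).comp (ContinuousLinearMap.fst ℝ _ _)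

noncomputable def momCoord (i : Fin N) : Phase N →L[ℝ] ℝ :=
  (ContinuousLinearMap.proj i).comp (ContinuousLinearMap.snd ℝ _ _)

theorem hasFDerivAt_Mf (i j : Fin N) (z : Phase N) :
    HasFDerivAt (Mf i j) (z.1 i • momCoord j + z.2 j • posCoord i
      - (z.1 j • momCoord i + z.2 i • posCoord j)) z :=
  ((posCoord i).hasFDerivAt.mul (momCoord j).hasFDerivAt).sub
    ((posCoord j).hasFDerivAt.mul (momCoord i).hasFDerivAt)

theorem fderiv_FBdeg_apply (a B : Fin N → ℝ) (z v : Phase N) :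
    fderiv ℝ (FBdeg a B) z v = (1 / 2) * ∑ i, ∑ j, neumannCoeff a B i j * Mf i j z
        * (z.1 i * v.2 j + v.1 i * z.2 j - (z.1 j * v.2 i + v.1 j * z.2 i))
      + 2 * ∑ i, B i * z.1 i * v.1 i := by
  have hx (i : Fin N) : HasFDerivAt (fun y : Phase N => y.1 i) (posCoord i) z :=
    (posCoord i).hasFDerivAt
  have hkinetic := HasFDerivAt.fun_sum fun i (_ : i ∈ univ) =>
    HasFDerivAt.fun_sum fun j (_ : j ∈ univ) =>
      ((hasFDerivAt_Mf i j z).pow 2).const_mul (neumannCoeff a B i j)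
  have hpotential := HasFDerivAt.fun_sum fun i (_ : i ∈ univ) => ((hx i).pow 2).const_mul (B i)
  rw [FBdeg_eq_quarter_sum, ((hkinetic.const_mul (1 / 4 : ℝ)).fun_add hpotential).fderiv]
  simp only [one_div, Nat.add_one_sub_one, pow_one, nsmul_eq_mul, Nat.cast_ofNat, momCoord,
    posCoord, add_apply, smul_apply, _root_.sum_apply, sub_apply, ContinuousLinearMap.comp_apply,
    ContinuousLinearMap.coe_snd', ContinuousLinearMap.coe_fst', ContinuousLinearMap.proj_apply,
    smul_eq_mul, mul_sum]
  congr 1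
  · exact sum_congr rfl fun i _ => sum_congr rfl fun j _ => by ring
  · exact sum_congr rfl fun i _ => by ring

theorem sum_neumannCoeff_mul_Mf_swap (a B : Fin N → ℝ) (z : Phase N) (k : Fin N)
    (w : Fin N → ℝ) :
    ∑ i, neumannCoeff a B k i * Mf k i z * w i = -∑ i, neumannCoeff a B i k * Mf i k z * w i := by
  rw [← sum_neg_distrib]
  exact sum_congr rfl fun i _ => by rw [neumannCoeff_comm, Mf_swap]; ring

theorem fderiv_FBdeg_momentum (a B : Fin N → ℝ) (z : Phase N) (k : Fin N) :
    fderiv ℝ (FBdeg a B) z (0, Pi.single k 1) = ∑ i, neumannCoeff a B i k * Mf i k z * z.1 i := by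
  rw [fderiv_FBdeg_apply]
  simp only [Pi.single_apply, mul_ite, mul_one, mul_zero, Pi.zero_apply, zero_mul, add_zero,
    mul_sub, sum_sub_distrib, sum_ite_eq', mem_univ, if_true, sum_ite_irrel, sum_const_zero,
    sum_neumannCoeff_mul_Mf_swap]
  ring

theorem fderiv_FBdeg_position (a B : Fin N → ℝ) (z : Phase N) (k : Fin N) :
    fderiv ℝ (FBdeg a B) z (Pi.single k 1, 0) =
      2 * B k * z.1 k - ∑ i, neumannCoeff a B i k * Mf i k z * z.2 i := by
  rw [fderiv_FBdeg_apply]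
  simp only [Pi.zero_apply, mul_zero, Pi.single_apply, ite_mul, one_mul, zero_mul, zero_add,
    mul_sub, mul_ite, sum_sub_distrib, sum_ite_irrel, sum_const_zero, sum_ite_eq', mem_univ,
    if_true, mul_one, sum_neumannCoeff_mul_Mf_swap]
  ring

end Derivatives

section Bracket

variable {N : ℕ}

theorem bracket_summand_eq (c₁ c₂ : Fin N → Fin N → ℝ) (b₁ b₂ : Fin N → ℝ) (z : Phase N)
    (k : Fin N) :
    (∑ i, c₁ i k * Mf i k z * z.1 i) * (2 * b₂ k * z.1 k - ∑ i, c₂ i k * Mf i k z * z.2 i)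
        - (2 * b₁ k * z.1 k - ∑ i, c₁ i k * Mf i k z * z.2 i) * ∑ i, c₂ i k * Mf i k z * z.1 i
      = ∑ i, 2 * (b₂ k * c₁ i k - b₁ k * c₂ i k) * (Mf i k z * (z.1 i * z.1 k))
        + ∑ i, ∑ j, c₁ i k * c₂ j k * (Mf i k z * Mf j k z * Mf j i z) := by
  calc _ = ∑ i, 2 * (b₂ k * (c₁ i k * Mf i k z * z.1 i) - b₁ k * (c₂ i k * Mf i k z * z.1 i))
          * z.1 k
        + ((∑ i, c₁ i k * Mf i k z * z.2 i) * ∑ j, c₂ j k * Mf j k z * z.1 j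
          - (∑ i, c₁ i k * Mf i k z * z.1 i) * ∑ j, c₂ j k * Mf j k z * z.2 j) := by
        simp only [← sum_mul, ← mul_sum, mul_sub, sub_mul, sum_sub_distrib]
        ring
    _ = _ := by
      rw [sum_mul_sum, sum_mul_sum, ← sum_sub_distrib]
      congr 1
      · exact sum_congr rfl fun i _ => by ring
      · refine sum_congr rfl fun i _ => ?_
        rw [← sum_sub_distrib]
        exact sum_congr rfl fun j _ => by simp only [Mf]; ring

theorem sum_bracket_summand_eq_zero (c₁ c₂ : Fin N → Fin N → ℝ) (b₁ b₂ : Fin N → ℝ) (z : Phase N)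
    (hc₁ : ∀ i j, c₁ j i = c₁ i j) (hc₂ : ∀ i j, c₂ j i = c₂ i j)
    (hb : ∀ i k, (b₂ k - b₂ i) * c₁ i k = (b₁ k - b₁ i) * c₂ i k)
    (halternating : ∀ i j k, c₁ i k * c₂ j k + c₁ j i * c₂ k i + c₁ k j * c₂ i j
      - c₁ j k * c₂ i k - c₁ i j * c₂ k j - c₁ k i * c₂ j i = 0) :
    ∑ k, ((∑ i, c₁ i k * Mf i k z * z.1 i) * (2 * b₂ k * z.1 k - ∑ i, c₂ i k * Mf i k z * z.2 i)
        - (2 * b₁ k * z.1 k - ∑ i, c₁ i k * Mf i k z * z.2 i) * ∑ i, c₂ i k * Mf i k z * z.1 i)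
      = 0 := by
  have hmixed : ∑ k, ∑ i, 2 * (b₂ k * c₁ i k - b₁ k * c₂ i k) * (Mf i k z * (z.1 i * z.1 k))
      = 0 :=
    sum_sum_mul_eq_zero_of_symm_of_antisymm _ _
      (fun k i => by linear_combination -2 * hb i k + 2 * b₂ i * hc₁ i k - 2 * b₁ i * hc₂ i k)
      (fun k i => by rw [Mf_swap]; ring)
  have hkinetic : ∑ k, ∑ i, ∑ j, c₁ i k * c₂ j k * (Mf i k z * Mf j k z * Mf j i z) = 0 :=
    (sum_sum_rotate _).symm.trans <| sum_sum_sum_mul_eq_zero_of_alternating _ _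
      (fun i j k => by rw [Mf_swap i k, Mf_swap j k]; ring)
      (fun i j k => by rw [Mf_swap j i]; ring) halternating
  simp only [bracket_summand_eq, sum_add_distrib, hmixed, hkinetic, add_zero]

end Bracket

/-- Let `A = (a₁,…,a_{n+1})` have possibly repeated entries
(partitioned into blocks of equal values).  For any two vectors `B₁, B₂` that are
constant on each block (`bᵢ = bⱼ` whenever `aᵢ = aⱼ`), the functions `F_{B₁}` and
`F_{B₂}` Poisson commute on `T*Sⁿ`. -/
theorem degenerate_neumann_integrals_commute (n : ℕ) (a : Fin (n+1) → ℝ)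
    (B₁ B₂ : Fin (n+1) → ℝ)
    (h₁ : ∀ i j, a i = a j → B₁ i = B₁ j)
    (h₂ : ∀ i j, a i = a j → B₂ i = B₂ j) :
    ∀ z ∈ TS (n+1), pb (FBdeg a B₁) (FBdeg a B₂) z = 0 := by
  intro z _
  simp only [pb, fderiv_FBdeg_momentum, fderiv_FBdeg_position]
  exact sum_bracket_summand_eq_zero _ _ B₁ B₂ z (neumannCoeff_comm B₁) (neumannCoeff_comm B₂)
    (sub_mul_neumannCoeff_swap B₁ B₂) (neumannCoeff_alternating h₁ h₂)
end

section
/- In the degenerate setting with blocks I_1,…,I_s, every momentum function M_{lm} with l, m in the same block I_r Poisson commutes with every F_B (for B constant on each block), and any M_{lm} with l,m ∈ I_{r_1} Poisson commutes with any M_{l'm'} with l',m' ∈ I_{r_2} when r_1 ≠ r_2. -/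
/-!
Since `{F, G} = dG(X_F)`, the bracket `{M_{lm}, ·}` is the derivative along the Hamiltonian
vector field of `M_{lm}`, which is the infinitesimal rotation in the `(l, m)`-plane acting on `x`
and `p` simultaneously. It is therefore a derivation satisfying the `so(N)` relations
`{M_{lm}, M_{ij}} = δ_{im} M_{lj} - δ_{il} M_{mj} + δ_{jm} M_{il} - δ_{jl} M_{im}`, which vanish
when `{i, j}` and `{l, m}` are disjoint; this gives the second claim. For the first, symmetrise
`F_B` to `(1/4) ∑_{i,j} c_{ij} M_{ij}² + ∑ b_i x_i²`: if `a_l = a_m` and `b_l = b_m`, the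
coefficients `c` cannot tell `l` from `m`, so the terms produced by the rows `l` and `m` (and
likewise the columns, and `b_m x_m x_l - b_l x_l x_m`) cancel in pairs.
-/

open scoped BigOperators

open Finset

lemma sum_sum_Ioi_eq_half {ι R : Type*} [Fintype ι] [LinearOrder ι] [LocallyFiniteOrderTop ι]
    [Field R] [CharZero R] (g : ι → ι → R) (hsymm : ∀ i j, g i j = g j i)
    (hdiag : ∀ i, g i i = 0) :
    ∑ i, ∑ j ∈ Ioi i, g i j = (1 / 2) * ∑ i, ∑ j, g i j := by
  have hsplit : ∀ i j, g i j = (if i < j then g i j else 0) + (if j < i then g j i else 0) := by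
    intro i j
    rcases lt_trichotomy i j with h | rfl | h
    · simp [h, h.not_gt]
    · simp [hdiag]
    · simp [h, h.not_gt, hsymm i j]
  have hIoi : ∀ i, ∑ j ∈ Ioi i, g i j = ∑ j, if i < j then g i j else 0 := fun i => by
    rw [← sum_filter]; congr 1; ext j; simp
  simp_rw [hIoi]
  conv_rhs => enter [2, 2, i, 2, j]; rw [hsplit i j]
  simp_rw [sum_add_distrib]
  rw [sum_comm (f := fun i j => if j < i then g j i else 0)]
  ring

noncomputable section

variable {N : ℕ}

@[fun_prop]
lemma differentiable_Mf (i j : Fin N) : Differentiable ℝ (Mf i j) := by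
  unfold Mf; fun_prop

lemma fderiv_fst_apply (i : Fin N) (z v : Phase N) :
    fderiv ℝ (fun w : Phase N => w.1 i) z v = v.1 i := by
  simp [fderiv_apply, fderiv_fst]

lemma fderiv_snd_apply (i : Fin N) (z v : Phase N) :
    fderiv ℝ (fun w : Phase N => w.2 i) z v = v.2 i := by
  simp [fderiv_apply, fderiv_snd]

lemma fderiv_Mf_apply (i j : Fin N) (z v : Phase N) :
    fderiv ℝ (Mf i j) z v = v.1 i * z.2 j + z.1 i * v.2 j - (v.1 j * z.2 i + z.1 j * v.2 i) := by
  unfold Mf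
  rw [fderiv_fun_sub (by fun_prop) (by fun_prop), fderiv_fun_mul (by fun_prop) (by fun_prop),
    fderiv_fun_mul (by fun_prop) (by fun_prop)]
  simp only [sub_apply, add_apply, smul_apply, smul_eq_mul, fderiv_fst_apply, fderiv_snd_apply]
  ring

lemma ContinuousLinearMap.apply_phase_eq_sum (L : Phase N →L[ℝ] ℝ) (v : Phase N) :
    L v = ∑ k, (v.1 k * L (Pi.single k 1, 0) + v.2 k * L (0, Pi.single k 1)) := by
  have hv : v = ∑ k, (v.1 k • (Pi.single k 1, 0) + v.2 k • (0, Pi.single k 1) : Phase N) := by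
    ext i <;> simp [Prod.fst_sum, Prod.snd_sum, Finset.sum_apply, Pi.single_apply]
  conv_lhs => rw [hv]
  simp only [map_sum, map_add, map_smul, smul_eq_mul]

def hamiltonianVectorField (F : Phase N → ℝ) (z : Phase N) : Phase N :=
  (fun k => fderiv ℝ F z (0, Pi.single k 1), fun k => -fderiv ℝ F z (Pi.single k 1, 0))

lemma pb_eq_fderiv_hamiltonianVectorField (F G : Phase N → ℝ) (z : Phase N) :
    pb F G z = fderiv ℝ G z (hamiltonianVectorField F z) := by
  rw [ContinuousLinearMap.apply_phase_eq_sum, pb]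
  simp only [hamiltonianVectorField]
  congr 1; ext k; ring

def planeRotation (l m : Fin N) (x : Fin N → ℝ) : Fin N → ℝ :=
  Pi.single m (x l) - Pi.single l (x m)

lemma hamiltonianVectorField_Mf (l m : Fin N) (z : Phase N) :
    hamiltonianVectorField (Mf l m) z = (planeRotation l m z.1, planeRotation l m z.2) := by
  ext k <;>
    simp [hamiltonianVectorField, planeRotation, fderiv_Mf_apply, Pi.single_apply, eq_comm]

section Leibniz

variable (F : Phase N → ℝ) {z : Phase N}

lemma pb_add_right {G H : Phase N → ℝ} (hG : DifferentiableAt ℝ G z)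
    (hH : DifferentiableAt ℝ H z) :
    pb F (fun w => G w + H w) z = pb F G z + pb F H z := by
  simp only [pb_eq_fderiv_hamiltonianVectorField, fderiv_fun_add hG hH, add_apply]

lemma pb_sum_right {ι : Type*} (s : Finset ι) {G : ι → Phase N → ℝ}
    (hG : ∀ i ∈ s, DifferentiableAt ℝ (G i) z) :
    pb F (fun w => ∑ i ∈ s, G i w) z = ∑ i ∈ s, pb F (G i) z := by
  simp only [pb_eq_fderiv_hamiltonianVectorField, fderiv_fun_sum hG, _root_.sum_apply]

lemma pb_const_mul_right {G : Phase N → ℝ} (c : ℝ) (hG : DifferentiableAt ℝ G z) :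
    pb F (fun w => c * G w) z = c * pb F G z := by
  simp only [pb_eq_fderiv_hamiltonianVectorField, fderiv_const_mul hG, smul_apply, smul_eq_mul]

lemma pb_sq_right {G : Phase N → ℝ} (hG : DifferentiableAt ℝ G z) :
    pb F (fun w => G w ^ 2) z = 2 * G z * pb F G z := by
  simp only [pb_eq_fderiv_hamiltonianVectorField, fderiv_fun_pow 2 hG, smul_apply, smul_eq_mul]
  norm_num

end Leibniz

lemma pb_Mf_fst (l m i : Fin N) (z : Phase N) :
    pb (Mf l m) (fun w => w.1 i) z = planeRotation l m z.1 i := by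
  rw [pb_eq_fderiv_hamiltonianVectorField, hamiltonianVectorField_Mf, fderiv_fst_apply]

lemma pb_Mf_Mf (l m i j : Fin N) (z : Phase N) :
    pb (Mf l m) (Mf i j) z =
      (if i = m then Mf l j z else 0) - (if i = l then Mf m j z else 0)
        + (if j = m then Mf i l z else 0) - (if j = l then Mf i m z else 0) := by
  rw [pb_eq_fderiv_hamiltonianVectorField, hamiltonianVectorField_Mf, fderiv_Mf_apply]
  simp only [planeRotation, Pi.sub_apply, Pi.single_apply, Mf]
  split_ifs <;> ring

def FBcoeff (a B : Fin N → ℝ) (i j : Fin N) : ℝ :=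
  if a i = a j then 0 else (B i - B j) / (a i - a j)

lemma FBcoeff_comm (a B : Fin N → ℝ) (i j : Fin N) : FBcoeff a B i j = FBcoeff a B j i := by
  unfold FBcoeff
  by_cases h : a i = a j
  · simp [h]
  · rw [if_neg h, if_neg (Ne.symm h), ← neg_sub (B j), ← neg_sub (a j), neg_div_neg_eq]

lemma Mf_self (i : Fin N) (z : Phase N) : Mf i i z = 0 := by
  simp [Mf]

lemma Mf_sq_comm (i j : Fin N) (z : Phase N) : Mf i j z ^ 2 = Mf j i z ^ 2 := by
  simp only [Mf]; ring

lemma FBdeg_eq_sum_sum (a B : Fin N → ℝ) :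
    FBdeg a B = fun z =>
      (1 / 4) * ∑ i, ∑ j, FBcoeff a B i j * Mf i j z ^ 2 + ∑ i, B i * z.1 i ^ 2 := by
  ext z
  have hsymm := sum_sum_Ioi_eq_half (fun i j => FBcoeff a B i j * Mf i j z ^ 2)
    (fun i j => by rw [FBcoeff_comm, Mf_sq_comm]) (fun i => by simp [Mf_self])
  simp only [FBdeg, FBcoeff] at hsymm ⊢
  rw [hsymm]
  ring

lemma pb_Mf_FBdeg {a B : Fin N → ℝ} {l m : Fin N} (ha : a l = a m) (hB : B l = B m)
    (z : Phase N) : pb (Mf l m) (FBdeg a B) z = 0 := by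
  have hrow : ∀ j, FBcoeff a B m j = FBcoeff a B l j := fun j => by simp [FBcoeff, ha, hB]
  have hcol : ∀ j, FBcoeff a B j m = FBcoeff a B j l := fun j => by
    rw [FBcoeff_comm, hrow, FBcoeff_comm]
  rw [FBdeg_eq_sum_sum]
  simp (disch := fun_prop) only [pb_add_right, pb_const_mul_right, pb_sum_right, pb_sq_right,
    pb_Mf_Mf, pb_Mf_fst]
  simp only [planeRotation, Pi.sub_apply, Pi.single_apply, mul_add, mul_sub, mul_ite, mul_zero,
    sum_add_distrib, sum_sub_distrib, sum_ite_eq', sum_ite_irrel, sum_const_zero, mem_univ,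
    if_true, hrow, hcol, hB, mul_right_comm _ (Mf m _ z) (Mf l _ z),
    mul_right_comm _ (Mf _ m z) (Mf _ l z)]
  ring

lemma pb_Mf_Mf_eq_zero {l m i j : Fin N} (hil : i ≠ l) (him : i ≠ m) (hjl : j ≠ l)
    (hjm : j ≠ m) (z : Phase N) : pb (Mf l m) (Mf i j) z = 0 := by
  simp [pb_Mf_Mf, hil, him, hjl, hjm]

end

/-- Blocks `I_r` are the level sets of `a`. -/
theorem block_rotations_commute_with_integrals (n : ℕ) (a : Fin (n+1) → ℝ) :
    (∀ B : Fin (n+1) → ℝ, (∀ i j, a i = a j → B i = B j) →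
      ∀ l m : Fin (n+1), a l = a m →
        ∀ z ∈ TS (n+1), pb (Mf l m) (FBdeg a B) z = 0) ∧
    (∀ l m l' m' : Fin (n+1), a l = a m → a l' = a m' → a l ≠ a l' →
        ∀ z ∈ TS (n+1), pb (Mf l m) (Mf l' m') z = 0) := by
  refine ⟨fun B hB l m ha z _ => pb_Mf_FBdeg ha (hB l m ha) z, ?_⟩
  intro l m l' m' ha ha' hne z _
  refine pb_Mf_Mf_eq_zero (fun h => hne ?_) (fun h => hne ?_) (fun h => hne ?_) (fun h => hne ?_) z
  all_goals subst h; simp [ha, ha']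
end
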